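/- arXiv:math/0502023 — 5 statements merged into one kernel-verified Lean document; each statement's English description precedes it below -/
import Mathlib

section
/- Let R be a commutative ring and e ≥ 1 an integer. Regard R((z)) as a subring of R((z^{1/e})) via z ↦ (z^{1/e})^e. Suppose f ∈ R((z^{1/e})) is invertible, with all coefficients of negative-degree terms lying in a nilpotent ideal and constant-like leading coefficient invertible, and suppose f^e ∈ R((z)). Then there exists an integer i with 0 ≤ i < e such that z^{i/e}·f ∈ R((z)). -/
/-!
Let `ζ` be a primitive `e`-th root of unity. Twisting coefficients by the character `k ↦ ζ ^ k`
is a ring endomorphism `σ` of `R((t))`, `t = z^{1/e}`, whose fixed points are exactly the series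
supported on `eℤ`, because `ζ ^ k - 1` is invertible for `e ∤ k`. So `u = σ f / f` satisfies
`u ^ e = 1`. For an `e`-th root of unity `ξ ≠ 1`, the series `σ f - ξ f` again has nilpotent
negative coefficients and invertible constant coefficient `(1 - ξ) a₀`, hence is a unit
(a unit power series plus a nilpotent Laurent polynomial). In `0 = u ^ e - 1 = ∏ (u - ξ)` all
factors but `u - 1` are therefore units, so `σ f = f`, and `i = 0` works.
-/

namespace HahnSeries

section

variable {Γ : Type*} [AddCommMonoid Γ] [PartialOrder Γ] [IsOrderedCancelAddMonoid Γ]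

def twist {R : Type*} [CommSemiring R] (χ : AddChar Γ R) : HahnSeries Γ R →+* HahnSeries Γ R where
  toFun x := ⟨fun k => χ k * x.coeff k, x.isPWO_support.mono fun _ => right_ne_zero_of_mul⟩
  map_one' := by
    ext k
    by_cases hk : k = 0 <;> simp [coeff_one, hk]
  map_mul' x y := by
    ext k
    change χ k * (x * y).coeff k = _
    rw [coeff_mul, coeff_mul_left' x.isPWO_support ?_, Finset.mul_sum]
    · refine (Finset.sum_congr rfl fun ij hij => ?_).trans
        (Finset.sum_subset (Finset.antidiagonal_mono_right fun _ => right_ne_zero_of_mul)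
          fun ij hij hij' => ?_).symm
      · rw [← (Finset.mem_antidiagonal.mp hij).2.2, AddChar.map_add_eq_mul]
        ring
      · obtain ⟨hi, -, hk⟩ := Finset.mem_antidiagonal.mp hij
        have hj : χ ij.2 * y.coeff ij.2 = 0 := by
          by_contra hj
          exact hij' (Finset.mem_antidiagonal.mpr ⟨hi, hj, hk⟩)
        exact mul_eq_zero_of_right _ hj
    · exact fun _ => right_ne_zero_of_mul
  map_zero' := by ext; simp
  map_add' x y := by ext; simp [mul_add]

@[simp]
theorem coeff_twist {R : Type*} [CommSemiring R] (χ : AddChar Γ R) (x : HahnSeries Γ R) (k : Γ) :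
    (twist χ x).coeff k = χ k * x.coeff k := rfl

theorem twist_eq_self {R : Type*} [CommSemiring R] {χ : AddChar Γ R} {x : HahnSeries Γ R}
    (hx : ∀ k, x.coeff k ≠ 0 → χ k = 1) : twist χ x = x := by
  ext k
  by_cases hk : x.coeff k = 0
  · simp [hk]
  · simp [hx k hk]

theorem coeff_eq_zero_of_twist_eq_self {R : Type*} [CommRing R] {χ : AddChar Γ R}
    {x : HahnSeries Γ R} (hx : twist χ x = x) {k : Γ} (hk : IsUnit (χ k - 1)) :
    x.coeff k = 0 := by
  have hxk : χ k * x.coeff k = x.coeff k := congrArg (coeff · k) hx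
  exact hk.mul_right_eq_zero.mp (by rw [sub_mul, one_mul, hxk, sub_self])

theorem isNilpotent_single {R : Type*} [Semiring R] (a : Γ) {r : R} (hr : IsNilpotent r) :
    IsNilpotent (single a r) := by
  obtain ⟨n, hn⟩ := hr
  exact ⟨n, by simp [single_pow, hn]⟩

end

theorem isUnit_of_coeff_neg_eq_zero {Γ R : Type*} [AddCommMonoid Γ] [LinearOrder Γ]
    [IsOrderedCancelAddMonoid Γ] [CommRing R] {x : HahnSeries Γ R}
    (hneg : ∀ i < 0, x.coeff i = 0) (h0 : IsUnit (x.coeff 0)) : IsUnit x := by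
  nontriviality R
  have hx : x ≠ 0 := fun h => h0.ne_zero (by simp [h])
  have hord : x.order = 0 :=
    le_antisymm (order_le_of_coeff_ne_zero h0.ne_zero) ((le_order_iff_forall hx).mpr hneg)
  refine isUnit_of_isUnit_leadingCoeff_AddUnitOrder ?_ ?_
  · rwa [leadingCoeff_eq, hord]
  · rw [hord]
    exact isAddUnit_zero

section Laurent

variable {R : Type*}

theorem truncLT_eq_sum [AddCommMonoid R] (c : ℤ) (x : HahnSeries ℤ R) :
    truncLT c x = ∑ i ∈ Finset.Ico x.order c, single i (x.coeff i) := by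
  ext j
  rw [HahnSeries.coeff_truncLT, coeff_sum]
  by_cases hj : j ∈ Finset.Ico x.order c
  · rw [Finset.sum_eq_single_of_mem j hj fun i _ hij => coeff_single_of_ne (Ne.symm hij),
      coeff_single_same, if_pos (Finset.mem_Ico.mp hj).2]
  · rw [Finset.sum_eq_zero fun i hi => coeff_single_of_ne (ne_of_mem_of_not_mem hi hj).symm]
    rw [Finset.mem_Ico, not_and_or, not_le, not_lt] at hj
    rcases hj with hj | hj
    · simp [coeff_eq_zero_of_lt_order hj]
    · simp [hj]

theorem isNilpotent_truncLT [CommSemiring R] {c : ℤ} {x : HahnSeries ℤ R}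
    (h : ∀ i < c, IsNilpotent (x.coeff i)) : IsNilpotent (truncLT c x) := by
  rw [truncLT_eq_sum]
  exact isNilpotent_sum fun i hi => isNilpotent_single i (h i (Finset.mem_Ico.mp hi).2)

variable [CommRing R]

theorem isUnit_of_isNilpotent_coeff_neg {x : HahnSeries ℤ R}
    (hneg : ∀ i < 0, IsNilpotent (x.coeff i)) (h0 : IsUnit (x.coeff 0)) : IsUnit x := by
  have hunit : IsUnit (x - truncLT 0 x) :=
    isUnit_of_coeff_neg_eq_zero (fun i hi => by simp [hi]) (by simpa using h0)
  simpa using (isNilpotent_truncLT hneg).isUnit_add_left_of_commute hunit (Commute.all _ _)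

theorem isUnit_twist_sub_smul (χ : AddChar ℤ R) {x : HahnSeries ℤ R}
    (hneg : ∀ i < 0, IsNilpotent (x.coeff i)) (h0 : IsUnit (x.coeff 0)) {c : R}
    (hc : IsUnit (1 - c)) : IsUnit (twist χ x - c • x) :=
  isUnit_of_isNilpotent_coeff_neg
    (fun i hi => by
      simpa [sub_mul] using (Commute.all (χ i - c) _).isNilpotent_mul_left (hneg i hi))
    (by simpa [sub_mul] using hc.mul h0)

end Laurent

end HahnSeries

theorem eq_one_of_pow_eq_one_of_isUnit_sub {K A : Type*} [CommRing K] [IsDomain K] [CommRing A]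
    (φ : K →+* A) {ζ : K} {n : ℕ} (hζ : IsPrimitiveRoot ζ n) (hn : 0 < n) {u : A}
    (hu : u ^ n = 1) (h : ∀ ξ ∈ Polynomial.nthRootsFinset n (1 : K), ξ ≠ 1 → IsUnit (u - φ ξ)) :
    u = 1 := by
  classical
  have hprod := congrArg (Polynomial.eval₂ φ u) (Polynomial.X_pow_sub_one_eq_prod hn hζ)
  simp only [Polynomial.eval₂_sub, Polynomial.eval₂_X_pow, Polynomial.eval₂_one,
    Polynomial.eval₂_finsetProd, Polynomial.eval₂_X, Polynomial.eval₂_C] at hprod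
  rw [hu, sub_self, ← Finset.mul_prod_erase _ _ (Polynomial.one_mem_nthRootsFinset hn),
    map_one] at hprod
  have hunit : IsUnit (∏ ξ ∈ (Polynomial.nthRootsFinset n (1 : K)).erase 1, (u - φ ξ)) :=
    IsUnit.prod_iff.mpr fun ξ hξ => h ξ (Finset.mem_of_mem_erase hξ) (Finset.ne_of_mem_erase hξ)
  exact sub_eq_zero.mp (hunit.mul_left_eq_zero.mp hprod.symm)

section ZPowChar

variable {K : Type*} (A : Type*) [Field K] [Ring A] [Algebra K A] {ζ : K}

def zpowChar (hζ : ζ ≠ 0) : AddChar ℤ A where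
  toFun k := algebraMap K A (ζ ^ k)
  map_zero_eq_one' := by simp
  map_add_eq_mul' a b := by rw [zpow_add₀ hζ, map_mul]

theorem zpowChar_eq_one {n : ℕ} (hζ : IsPrimitiveRoot ζ n) (hζ0 : ζ ≠ 0) {k : ℤ}
    (hk : (n : ℤ) ∣ k) : zpowChar A hζ0 k = 1 := by
  simp [zpowChar, (hζ.zpow_eq_one_iff_dvd k).mpr hk]

theorem isUnit_zpowChar_sub_one {n : ℕ} (hζ : IsPrimitiveRoot ζ n) (hζ0 : ζ ≠ 0) {k : ℤ}
    (hk : ¬ (n : ℤ) ∣ k) : IsUnit (zpowChar A hζ0 k - 1) := by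
  have hne : ζ ^ k - 1 ≠ 0 := sub_ne_zero.mpr fun h => hk ((hζ.zpow_eq_one_iff_dvd k).mp h)
  simpa [zpowChar] using (isUnit_iff_ne_zero.mpr hne).map (algebraMap K A)

end ZPowChar

open HahnSeries in
theorem exists_root_shift_mem_base_general
    (R : Type*) [CommRing R] [Algebra ℂ R] (e : ℕ) (he : 0 < e)
    (f : HahnSeries ℤ R)
    (hneg : ∀ i : ℤ, i < 0 → IsNilpotent (f.coeff i))
    (h0 : IsUnit (f.coeff 0))
    (hfe : ∀ k : ℤ, ¬ (e : ℤ) ∣ k → (f ^ e).coeff k = 0) :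
    ∃ i : ℕ, i < e ∧ ∀ k : ℤ, ¬ (e : ℤ) ∣ k →
      ((HahnSeries.single (i : ℤ) 1 : HahnSeries ℤ R) * f).coeff k = 0 := by
  obtain ⟨ζ, hζ⟩ : ∃ ζ : ℂ, IsPrimitiveRoot ζ e := ⟨_, Complex.isPrimitiveRoot_exp e he.ne'⟩
  have hζ0 := hζ.ne_zero he.ne'
  set σ := twist (zpowChar R hζ0)
  have hσfe : σ (f ^ e) = f ^ e :=
    twist_eq_self fun k hk => zpowChar_eq_one R hζ hζ0 (not_not.mp (mt (hfe k) hk))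
  obtain ⟨v, rfl⟩ := isUnit_of_isNilpotent_coeff_neg hneg h0
  set u : HahnSeries ℤ R := σ v * ↑v⁻¹
  have hu : u ^ e = 1 := by
    rw [mul_pow, ← map_pow, hσfe, ← Units.val_pow_eq_pow_val, ← Units.val_pow_eq_pow_val,
      inv_pow, Units.mul_inv]
  have hroots : ∀ ξ ∈ Polynomial.nthRootsFinset e (1 : ℂ), ξ ≠ 1 →
      IsUnit (u - C (algebraMap ℂ R ξ)) := by
    intro ξ _ hξ
    have hc : IsUnit (1 - algebraMap ℂ R ξ) := by
      simpa using (isUnit_iff_ne_zero.mpr (sub_ne_zero.mpr hξ.symm)).map (algebraMap ℂ R)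
    convert (isUnit_twist_sub_smul (zpowChar R hζ0) hneg h0 hc).mul v⁻¹.isUnit using 1
    rw [← C_mul_eq_smul, sub_mul, mul_assoc (C _), Units.mul_inv, mul_one]
  have hσv : σ v = v :=
    Units.mul_inv_eq_one.mp
      (eq_one_of_pow_eq_one_of_isUnit_sub (C.comp (algebraMap ℂ R)) hζ he hu hroots)
  refine ⟨0, he, fun k hk => ?_⟩
  rw [Nat.cast_zero, single_zero_one, one_mul]
  exact coeff_eq_zero_of_twist_eq_self hσv (isUnit_zpowChar_sub_one R hζ hζ0 hk)

/-- Let `R` be a commutative (ℂ-)algebra and `e ≥ 1`.  Model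
`W = R((z^{1/e}))` as `HahnSeries ℤ R` in the variable `t = z^{1/e}`, so that
`R((z))` is the subring of series supported on exponents divisible by `e`.
If `f ∈ R((z^{1/e}))` is invertible, with all negative coefficients nilpotent and
the `0`-th coefficient invertible, and `f^e ∈ R((z))`, then there is `0 ≤ i < e`
with `z^{i/e}·f ∈ R((z))`. -/
theorem exists_root_shift_mem_base
    (R : Type*) [CommRing R] [Algebra ℂ R] (e : ℕ) (he : 0 < e)
    (f : HahnSeries ℤ R)
    (hf : IsUnit f)
    (hneg : ∀ i : ℤ, i < 0 → IsNilpotent (f.coeff i))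
    (h0 : IsUnit (f.coeff 0))
    (hfe : ∀ k : ℤ, ¬ (e : ℤ) ∣ k → (f ^ e).coeff k = 0) :
    ∃ i : ℕ, i < e ∧ ∀ k : ℤ, ¬ (e : ℤ) ∣ k →
      ((HahnSeries.single (i : ℤ) 1 : HahnSeries ℤ R) * f).coeff k = 0 :=
  exists_root_shift_mem_base_general R e he f hneg h0 hfe
end

section
/- Let e ≥ 1, V = R((z)) ⊂ W = R((z^{1/e})) for a C-algebra R, and let ḡ be a continuous R-algebra automorphism of W of the form ḡ(z^{1/e}) = z^{1/e}·u(z^{1/e}) with u invertible, such that ḡ restricts to an automorphism g of V. Then for all w ∈ W one has tr(ḡ(w)) = g(tr(w)); i.e., ḡ commutes with the trace map tr: W → V. -/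
open HahnSeries

/-- The embedding `R((z)) → R((z^{1/e}))`, modelled as the ring homomorphism
`R((z)) → R((t))` sending `z ↦ t^e` (where `t` plays the role of `z^{1/e}`),
i.e. rescaling exponents by `e`.  Here the ring of formal Laurent series `R((z))`
is `HahnSeries ℤ R` (Mathlib's `LaurentSeries R`). -/
noncomputable def rootEmb (R : Type*) [CommRing R] (e : ℕ) (he : 0 < e) :
    HahnSeries ℤ R →+* HahnSeries ℤ R :=
  HahnSeries.embDomainRingHom (AddMonoidHom.mulLeft (e : ℤ))
    (fun a b hab => by
      have h : (e : ℤ) * a = (e : ℤ) * b := hab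
      exact mul_left_cancel₀ (by exact_mod_cast he.ne') h)
    (fun a b => by
      show (e : ℤ) * a ≤ (e : ℤ) * b ↔ a ≤ b
      exact mul_le_mul_iff_of_pos_left (by exact_mod_cast he))

/-- The image `V = R((z)) ⊆ W = R((z^{1/e}))` of the above embedding, as a subring:
the series supported on exponents divisible by `e`. -/
noncomputable def rootSub (R : Type*) [CommRing R] (e : ℕ) (he : 0 < e) :
    Subring (HahnSeries ℤ R) :=
  (rootEmb R e he).range

theorem Subring.trace_ringEquiv_apply {B : Type*} [CommRing B] (A : Subring B) (σ : B ≃+* B)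
    (hσ : ∀ b, b ∈ A ↔ σ b ∈ A) (b : B) :
    (Algebra.trace A B (σ b) : B) = σ (Algebra.trace A B b) := by
  let τ : A ≃+* A := σ.restrict A A hσ
  have hτ : τ (Algebra.trace A B b) = Algebra.trace A B (σ b) := by
    rw [Algebra.trace_eq_of_equiv_equiv τ σ (by ext; rfl) b, RingEquiv.apply_symm_apply]
  exact congrArg Subtype.val hτ.symm

theorem trace_comm_of_restricts_general
    (R : Type*) [CommRing R] (e : ℕ) (he : 0 < e)
    (gbar : HahnSeries ℤ R ≃ₐ[R] HahnSeries ℤ R)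
    (hV : ∀ w : HahnSeries ℤ R, w ∈ rootSub R e he ↔ gbar w ∈ rootSub R e he) :
    ∀ w : HahnSeries ℤ R,
      ((Algebra.trace (rootSub R e he) (HahnSeries ℤ R) (gbar w) :
          rootSub R e he) : HahnSeries ℤ R)
        = gbar ((Algebra.trace (rootSub R e he) (HahnSeries ℤ R) w :
            rootSub R e he) : HahnSeries ℤ R) :=
  Subring.trace_ringEquiv_apply (rootSub R e he) gbar.toRingEquiv hV

/-- Let `V = R((z)) ⊂ W = R((z^{1/e}))` for a ℂ-algebra `R`, and let `ḡ`
be an `R`-algebra automorphism of `W` of the form `ḡ(z^{1/e}) = z^{1/e}·u` with `u`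
invertible, which restricts to an automorphism `g` of `V`.  Then `tr(ḡ(w)) = g(tr(w))`
for all `w ∈ W`, i.e. `ḡ` commutes with the trace map `tr : W → V`.  (Since `g` is the
restriction of `ḡ` to `V`, the right-hand side is expressed by applying `ḡ`.) -/
theorem trace_comm_of_restricts
    (R : Type*) [CommRing R] [Algebra ℂ R] (e : ℕ) (he : 0 < e)
    (gbar : HahnSeries ℤ R ≃ₐ[R] HahnSeries ℤ R)
    (u : HahnSeries ℤ R) (hu : IsUnit u)
    (hform : gbar (HahnSeries.single 1 1) = HahnSeries.single 1 1 * u)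
    (hV : ∀ w : HahnSeries ℤ R, w ∈ rootSub R e he ↔ gbar w ∈ rootSub R e he) :
    ∀ w : HahnSeries ℤ R,
      ((Algebra.trace (rootSub R e he) (HahnSeries ℤ R) (gbar w) :
          rootSub R e he) : HahnSeries ℤ R)
        = gbar ((Algebra.trace (rootSub R e he) (HahnSeries ℤ R) w :
            rootSub R e he) : HahnSeries ℤ R) :=
  trace_comm_of_restricts_general R e he gbar hV
end

section
/- Conversely, let ḡ be a continuous R-algebra automorphism of W = R((z^{1/e})) in the connected component of the identity (i.e., ḡ(z^{1/e}) = Σ_i a_i z^{i/e}·z^{1/e} with a_i nilpotent for i<0 and a_0 invertible). If tr∘ḡ = ḡ∘tr on W (where tr: W → R((z)) is the trace), then ḡ preserves V = R((z)), i.e., ḡ(V) = V. -/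
/-!
Since `W` is free over `V` with basis `1, t, …, t^{e-1}` (`t = z^{1/e}`), the trace `W → V`
restricts to multiplication by `e` on `V`. Hence for `v ∈ V`,
`tr (ḡ v) = ḡ (tr v) = ḡ (e v) = e ḡ v`, and as `e` is invertible in the `ℂ`-algebra `R`,
`ḡ v = e⁻¹ tr (ḡ v) ∈ V`. The inverse `ḡ⁻¹` also commutes with the trace, which gives `ḡ V = V`.
-/

open HahnSeries

section TraceCommuting

variable {B : Type*} [CommRing B] (A : Subring B) {ι : Type*} [Fintype ι]

theorem Subring.map_mem_of_trace_comm (b : Module.Basis ι A B)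
    (hunit : IsUnit (Fintype.card ι : A)) (g : B ≃+ B)
    (hcomm : ∀ w, (Algebra.trace A B (g w) : B) = g (Algebra.trace A B w))
    {x : B} (hx : x ∈ A) : g x ∈ A := by
  obtain ⟨u, hu⟩ := hunit
  have htrace : (Algebra.trace A B (g x) : B) = (u : A) * g x :=
    calc (Algebra.trace A B (g x) : B)
        = g (Algebra.trace A B (algebraMap A B ⟨x, hx⟩)) := hcomm x
      _ = g (Fintype.card ι • x) := by rw [Algebra.trace_algebraMap_of_basis b]; rfl
      _ = (u : A) * g x := by rw [map_nsmul, hu, nsmul_eq_mul]; rfl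
  have hgx : g x = ((u⁻¹ : Aˣ) : A) * (Algebra.trace A B (g x) : B) := by
    rw [htrace, ← mul_assoc, ← Subring.coe_mul, Units.inv_mul, Subring.coe_one, one_mul]
  rw [hgx]
  exact A.mul_mem (SetLike.coe_mem _) (SetLike.coe_mem _)

theorem Subring.image_eq_of_trace_comm (b : Module.Basis ι A B)
    (hunit : IsUnit (Fintype.card ι : A)) (g : B ≃+ B)
    (hcomm : ∀ w, (Algebra.trace A B (g w) : B) = g (Algebra.trace A B w)) :
    ⇑g '' (A : Set B) = A := by
  have hcomm_symm (w : B) :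
      (Algebra.trace A B (g.symm w) : B) = g.symm (Algebra.trace A B w) := by
    rw [← g.symm_apply_apply (Algebra.trace A B (g.symm w) : B), ← hcomm, g.apply_symm_apply]
  refine subset_antisymm ?_ fun x hx =>
    ⟨g.symm x, A.map_mem_of_trace_comm b hunit g.symm hcomm_symm hx, g.apply_symm_apply x⟩
  exact Set.image_subset_iff.mpr fun x hx => A.map_mem_of_trace_comm b hunit g hcomm hx

end TraceCommuting

section RootBasis

variable {R : Type*} [CommRing R] {e : ℕ}

theorem coeff_rootEmb_mul (he : 0 < e) (g : HahnSeries ℤ R) (m : ℤ) :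
    (rootEmb R e he g).coeff (e * m) = g.coeff m :=
  embDomain_coeff

theorem coeff_eq_zero_of_mem_rootSub (he : 0 < e) {f : HahnSeries ℤ R}
    (hf : f ∈ rootSub R e he) {n : ℤ} (hn : ¬ (e : ℤ) ∣ n) : f.coeff n = 0 := by
  obtain ⟨g, rfl⟩ := hf
  exact embDomain_of_notMem_range fun ⟨m, hm⟩ => hn ⟨m, hm.symm⟩

theorem Fin.eq_of_intCast_dvd_sub {i j : Fin e} (h : (e : ℤ) ∣ (j : ℤ) - i) : i = j := by
  have hi := i.isLt
  have hj := j.isLt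
  have : (j : ℤ) - i = 0 := Int.eq_zero_of_abs_lt_dvd h (by rw [abs_lt]; omega)
  omega

theorem Int.exists_eq_mul_add_fin (he : 0 < e) (n : ℤ) :
    ∃ (m : ℤ) (j : Fin e), n = e * m + j := by
  have hnn : 0 ≤ n % e := Int.emod_nonneg n (by omega)
  have hlt : n % e < e := Int.emod_lt_of_pos n (by omega)
  have hdiv := Int.mul_ediv_add_emod n e
  exact ⟨n / e, ⟨(n % e).toNat, by omega⟩, by push_cast; omega⟩

/-- `∑ₘ f_{em+j} zᵐ`; its image under `rootEmb` is the coordinate of `f` along `t^j` in the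
basis `1, t, …, t^{e-1}` of `W` over `V`. -/
noncomputable def rootPart (he : 0 < e) (f : HahnSeries ℤ R) (j : ℤ) : HahnSeries ℤ R :=
  ofSuppBddBelow (fun m : ℤ => f.coeff (e * m + j)) <| by
    refine ⟨min 0 (f.order - j), fun m hm => ?_⟩
    contrapose! hm
    rw [Function.notMem_support]
    refine coeff_eq_zero_of_lt_order (x := f) ?_
    have : m < 0 := lt_of_lt_of_le hm (min_le_left _ _)
    have : m < f.order - j := lt_of_lt_of_le hm (min_le_right _ _)
    nlinarith [he]

theorem coeff_sum_smul_single (he : 0 < e) (c : Fin e → rootSub R e he) (m : ℤ) (j : Fin e) :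
    (∑ i, c i • single (i : ℤ) (1 : R)).coeff (e * m + j) =
      (c j : HahnSeries ℤ R).coeff (e * m) := by
  rw [coeff_sum, Finset.sum_eq_single j]
  · rw [Subring.smul_def, smul_eq_mul, coeff_mul_single, mul_one, add_sub_cancel_right]
  · intro i _ hij
    rw [Subring.smul_def, smul_eq_mul, coeff_mul_single, mul_one]
    refine coeff_eq_zero_of_mem_rootSub he (c i).2 fun hdvd => hij (Fin.eq_of_intCast_dvd_sub ?_)
    have hsub : (j : ℤ) - i = (e * m + j - i) - e * m := by ring
    exact hsub ▸ dvd_sub hdvd (dvd_mul_right (e : ℤ) m)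
  · exact fun hj => absurd (Finset.mem_univ j) hj

theorem linearIndependent_single_rootSub (he : 0 < e) :
    LinearIndependent (rootSub R e he) fun j : Fin e => single (j : ℤ) (1 : R) := by
  refine Fintype.linearIndependent_iff.mpr fun c hc j =>
    Subtype.ext <| coeff_injective <| funext fun n => ?_
  by_cases hn : (e : ℤ) ∣ n
  · obtain ⟨m, rfl⟩ := hn
    rw [← coeff_sum_smul_single he c m j, hc]
    rfl
  · exact coeff_eq_zero_of_mem_rootSub he (c j).2 hn

theorem sum_rootPart_smul_single (he : 0 < e) (f : HahnSeries ℤ R) :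
    ∑ j : Fin e, (⟨_, (rootEmb R e he).mem_range_self (rootPart he f j)⟩ : rootSub R e he) •
      single (j : ℤ) (1 : R) = f := by
  refine coeff_injective <| funext fun n => ?_
  obtain ⟨m, j, rfl⟩ := Int.exists_eq_mul_add_fin he n
  rw [coeff_sum_smul_single]
  exact coeff_rootEmb_mul he (rootPart he f j) m

noncomputable def rootBasis (he : 0 < e) :
    Module.Basis (Fin e) (rootSub R e he) (HahnSeries ℤ R) :=
  Module.Basis.mk (linearIndependent_single_rootSub he) fun f _ =>
    sum_rootPart_smul_single he f ▸
      Submodule.sum_mem _ fun j _ => Submodule.smul_mem _ _ (Submodule.subset_span ⟨j, rfl⟩)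

theorem isUnit_natCast_rootSub (he : 0 < e) {n : ℕ} (hn : IsUnit (n : R)) :
    IsUnit (n : rootSub R e he) := by
  unfold rootSub
  simpa using hn.map ((rootEmb R e he).rangeRestrict.comp HahnSeries.C)

end RootBasis

theorem preserves_base_of_trace_comm_general
    (R : Type*) [CommRing R] [Algebra ℂ R] (e : ℕ) (he : 0 < e)
    (gbar : HahnSeries ℤ R ≃ₐ[R] HahnSeries ℤ R)
    (hcomm : ∀ w : HahnSeries ℤ R,
      ((Algebra.trace (rootSub R e he) (HahnSeries ℤ R) (gbar w) :
          rootSub R e he) : HahnSeries ℤ R)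
        = gbar ((Algebra.trace (rootSub R e he) (HahnSeries ℤ R) w :
            rootSub R e he) : HahnSeries ℤ R)) :
    ⇑gbar '' (rootSub R e he : Set (HahnSeries ℤ R)) = rootSub R e he := by
  have he_unit : IsUnit (e : R) := by
    simpa using (Nat.cast_ne_zero.mpr he.ne' : (e : ℂ) ≠ 0).isUnit.map (algebraMap ℂ R)
  refine (rootSub R e he).image_eq_of_trace_comm (rootBasis he) ?_ gbar.toAddEquiv hcomm
  rw [Fintype.card_fin]
  exact isUnit_natCast_rootSub he he_unit

/-- Conversely, let `ḡ` be an `R`-algebra automorphism of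
`W = R((z^{1/e}))` in the identity component (`ḡ(z^{1/e}) = z^{1/e}·u` with the
negative coefficients of `u` nilpotent and its `0`-th coefficient invertible).
If `tr ∘ ḡ = ḡ ∘ tr` on `W`, then `ḡ` preserves `V = R((z))`, i.e. `ḡ(V) = V`. -/
theorem preserves_base_of_trace_comm
    (R : Type*) [CommRing R] [Algebra ℂ R] (e : ℕ) (he : 0 < e)
    (gbar : HahnSeries ℤ R ≃ₐ[R] HahnSeries ℤ R)
    (u : HahnSeries ℤ R)
    (hform : gbar (HahnSeries.single 1 1) = HahnSeries.single 1 1 * u)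
    (hneg : ∀ i : ℤ, i < 0 → IsNilpotent (u.coeff i))
    (h0 : IsUnit (u.coeff 0))
    (hcomm : ∀ w : HahnSeries ℤ R,
      ((Algebra.trace (rootSub R e he) (HahnSeries ℤ R) (gbar w) :
          rootSub R e he) : HahnSeries ℤ R)
        = gbar ((Algebra.trace (rootSub R e he) (HahnSeries ℤ R) w :
            rootSub R e he) : HahnSeries ℤ R)) :
    ⇑gbar '' (rootSub R e he : Set (HahnSeries ℤ R)) = rootSub R e he :=
  preserves_base_of_trace_comm_general R e he gbar hcomm
end

section
/- Let W be a commutative ring, U ⊆ W a subring with 1 ∈ U, and tr: W → W an additive map with tr(U) ⊆ U. Let A be an additive complement of U in W and f: U → A additive. In W ⊗ C[ε]/(ε²), set Ū = {u + εf(u) : u ∈ U}. Assume tr extends ε-linearly. Then tr(Ū) ⊆ Ū if and only if tr¹(f(u)) = f(tr(u)) in W/U for all u ∈ U, where tr¹: W/U → W/U is the map induced by tr (well-defined since tr(U) ⊆ U). -/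
/-- The graph deformation `Ū = {u + ε(f(u) + u') : u, u' ∈ U}` of `U` inside
`W ⊗ ℂ[ε]/(ε²)` (the `ε`-span is included), modelled inside the dual numbers
`W[ε] = TrivSqZeroExt W W`. -/
def graphDefAdd {W : Type*} [CommRing W] (U : Subring W) (f : ↥U →+ W) :
    Set (TrivSqZeroExt W W) :=
  {p | ∃ u u' : ↥U, p = TrivSqZeroExt.inl (u : W) + TrivSqZeroExt.inr (f u + (u' : W))}

/-- Let `W` be a commutative ring, `U ⊆ W` a subring, `tr : W → W`
additive with `tr(U) ⊆ U`, `A` an additive complement of `U` and `f : U → A`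
additive.  Extending `tr` ε-linearly to `W ⊗ ℂ[ε]/(ε²)`, the graph deformation `Ū`
of `U` determined by `f` satisfies `tr(Ū) ⊆ Ū` if and only if
`tr¹(f(u)) = f(tr(u))` in `W/U` for all `u ∈ U`, where `tr¹` is induced by `tr`. -/
theorem trace_stable_graph_iff
    (W : Type*) [CommRing W] (U : Subring W) (A : AddSubgroup W)
    (hcompl : IsCompl U.toAddSubgroup A)
    (f : ↥U →+ W) (hfA : ∀ u : ↥U, f u ∈ A)
    (tr : W →+ W) (htr : ∀ u ∈ U, tr u ∈ U) :
    (∀ p ∈ graphDefAdd U f,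
        (TrivSqZeroExt.inl (tr p.fst) + TrivSqZeroExt.inr (tr p.snd) :
          TrivSqZeroExt W W) ∈ graphDefAdd U f)
      ↔ (∀ u : ↥U, tr (f u) - f ⟨tr (u : W), htr (u : W) u.2⟩ ∈ U) := by
  constructor
  · intro h u
    obtain ⟨v, v', hv⟩ := h (TrivSqZeroExt.inl (u : W) +
      TrivSqZeroExt.inr (f u + ((0 : ↥U) : W))) ⟨u, 0, rfl⟩
    have hfst : tr (u : W) = (v : W) := by
      have := congrArg TrivSqZeroExt.fst hv
      simpa using this
    have hsnd : tr (f u) = f v + (v' : W) := by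
      have := congrArg TrivSqZeroExt.snd hv
      simp at this; exact this
    have hv' : v = ⟨tr (u : W), htr (u : W) u.2⟩ := by
      ext; exact hfst.symm
    rw [hv'] at hsnd
    rw [hsnd]
    simpa using v'.2
  · intro h p hp
    obtain ⟨u, u', hu⟩ := hp
    subst hu
    have hmem : tr (f u) + tr (u' : W) - f ⟨tr (u : W), htr (u : W) u.2⟩ ∈ U := by
      have e : tr (f u) + tr (u' : W) - f ⟨tr (u : W), htr (u : W) u.2⟩
          = tr (u' : W) + (tr (f u) - f ⟨tr (u : W), htr (u : W) u.2⟩) := by ring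
      rw [e]
      exact U.add_mem (htr _ u'.2) (h u)
    refine ⟨⟨tr (u : W), htr (u : W) u.2⟩,
      ⟨tr (f u) + tr (u' : W) - f ⟨tr (u : W), htr (u : W) u.2⟩, hmem⟩, ?_⟩
    ext <;> simp [map_add] <;> ring
end

section
/- Let e ≥ 1 and let u ∈ R((z^{1/e})) be a unit congruent to an invertible constant modulo nilpotents (u = Σ a_i z^{i/e} with a_i nilpotent for i < 0 and a_0 ∈ R^×) such that u^e ∈ R((z)), where R is a commutative C-algebra. If additionally the lowest nonvanishing nilpotent coefficients pairwise multiply to zero (a_i a_j = 0 for all i,j < 0), then the smallest index i₀ < 0 with a_{i₀} ≠ 0 satisfies e | i₀. -/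
section Aux

variable {S : Type*} [CommRing S]

private lemma aux_pow_sq_zero (a b : S) (hb : b * b = 0) :
    ∀ n : ℕ, (a + b) ^ (n + 1) = a ^ (n + 1) + ((n : S) + 1) * (a ^ n * b)
  | 0 => by ring
  | n + 1 => by
    have ih := aux_pow_sq_zero a b hb n
    have h : (a + b) ^ (n + 1 + 1) = (a + b) ^ (n + 1) * (a + b) := by ring
    rw [h, ih]
    push_cast
    linear_combination ((n : S) + 1) * a ^ n * hb

private lemma aux_mul_coeff_neg (x y : HahnSeries ℤ S)
    (hx : ∀ i : ℤ, i < 0 → x.coeff i = 0) (hy : ∀ i : ℤ, i < 0 → y.coeff i = 0) :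
    ∀ k : ℤ, k < 0 → (x * y).coeff k = 0 := by
  intro k hk
  rw [HahnSeries.coeff_mul]
  apply Finset.sum_eq_zero
  rintro ⟨i, j⟩ hij
  rw [Finset.mem_addAntidiagonal] at hij
  obtain ⟨hi, hj, hsum⟩ := hij
  by_cases h1 : i < 0
  · rw [hx i h1, zero_mul]
  · by_cases h2 : j < 0
    · rw [hy j h2, mul_zero]
    · exfalso; omega

private lemma aux_mul_coeff_zero (x y : HahnSeries ℤ S)
    (hx : ∀ i : ℤ, i < 0 → x.coeff i = 0) (hy : ∀ i : ℤ, i < 0 → y.coeff i = 0) :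
    (x * y).coeff 0 = x.coeff 0 * y.coeff 0 := by
  rw [HahnSeries.coeff_mul]
  apply Finset.sum_eq_single ((0 : ℤ), (0 : ℤ))
  · rintro ⟨i, j⟩ hij hnep
    rw [Finset.mem_addAntidiagonal] at hij
    obtain ⟨hi, hj, hsum⟩ := hij
    exfalso; apply hnep
    have h1 : ¬ i < 0 := fun h => hi (hx i h)
    have h2 : ¬ j < 0 := fun h => hj (hy j h)
    have hij0 : i = 0 ∧ j = 0 := by omega
    simp [Prod.ext_iff, hij0.1, hij0.2]
  · intro h
    by_cases hx0 : x.coeff 0 = 0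
    · rw [hx0, zero_mul]
    · by_cases hy0 : y.coeff 0 = 0
      · rw [hy0, mul_zero]
      · exact absurd (Finset.mem_addAntidiagonal.2
          ⟨Function.mem_support.2 hx0, Function.mem_support.2 hy0, add_zero 0⟩) h

private lemma aux_pow_nonneg (x : HahnSeries ℤ S)
    (hx : ∀ i : ℤ, i < 0 → x.coeff i = 0) :
    ∀ n : ℕ, (∀ i : ℤ, i < 0 → (x ^ n).coeff i = 0) ∧ (x ^ n).coeff 0 = x.coeff 0 ^ n
  | 0 => by
    constructor
    · intro i hi
      rw [pow_zero, HahnSeries.coeff_one, if_neg (by omega)]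
    · simp
  | n + 1 => by
    obtain ⟨h1, h2⟩ := aux_pow_nonneg x hx n
    rw [pow_succ]
    exact ⟨aux_mul_coeff_neg _ _ h1 hx,
      by rw [aux_mul_coeff_zero _ _ h1 hx, h2, pow_succ]⟩

end Aux

/-- Let `R` be a commutative ℂ-algebra, `e ≥ 1`, and let
`u ∈ R((z^{1/e}))` (modelled as `HahnSeries ℤ R` in the variable `t = z^{1/e}`) be a
unit with `u = Σ aᵢ z^{i/e}`, `aᵢ` nilpotent for `i < 0` and `a₀` invertible, such
that `u^e ∈ R((z))` (i.e. `u^e` is supported on exponents divisible by `e`).  If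
moreover `aᵢaⱼ = 0` for all `i, j < 0`, then the smallest index `i₀ < 0` with
`a_{i₀} ≠ 0` is divisible by `e`. -/
theorem lowest_nilpotent_index_divisible
    (R : Type*) [CommRing R] [Algebra ℂ R] (e : ℕ) (he : 0 < e)
    (u : HahnSeries ℤ R) (hu : IsUnit u)
    (hneg : ∀ i : ℤ, i < 0 → IsNilpotent (u.coeff i))
    (h0 : IsUnit (u.coeff 0))
    (hpair : ∀ i j : ℤ, i < 0 → j < 0 → u.coeff i * u.coeff j = 0)
    (hpow : ∀ k : ℤ, ¬ (e : ℤ) ∣ k → (u ^ e).coeff k = 0)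
    (i₀ : ℤ) (hi₀ : i₀ < 0) (hne : u.coeff i₀ ≠ 0)
    (hmin : ∀ i : ℤ, i < i₀ → u.coeff i = 0) :
    (e : ℤ) ∣ i₀ := by
  by_contra hdvd
  -- decompose u = P + N
  set N : HahnSeries ℤ R :=
    ⟨fun i => if i < 0 then u.coeff i else 0,
      u.isPWO_support.mono (by
        intro i hi
        simp only [Function.mem_support] at hi
        by_cases h : i < 0
        · rw [if_pos h] at hi; exact hi
        · rw [if_neg h] at hi; exact absurd rfl hi)⟩ with hN
  set P : HahnSeries ℤ R :=
    ⟨fun i => if i < 0 then 0 else u.coeff i,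
      u.isPWO_support.mono (by
        intro i hi
        simp only [Function.mem_support] at hi
        by_cases h : i < 0
        · rw [if_pos h] at hi; exact absurd rfl hi
        · rw [if_neg h] at hi; exact hi)⟩ with hP
  have hNcoeff : ∀ i : ℤ, N.coeff i = if i < 0 then u.coeff i else 0 := fun i => rfl
  have hPcoeff : ∀ i : ℤ, P.coeff i = if i < 0 then 0 else u.coeff i := fun i => rfl
  have hPneg : ∀ i : ℤ, i < 0 → P.coeff i = 0 := fun i hi => by
    rw [hPcoeff, if_pos hi]
  have huPN : u = P + N := by
    ext i
    rw [HahnSeries.coeff_add, hPcoeff, hNcoeff]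
    by_cases h : i < 0 <;> simp [h]
  have hNN : N * N = 0 := by
    ext k
    rw [HahnSeries.coeff_mul, HahnSeries.coeff_zero]
    apply Finset.sum_eq_zero
    rintro ⟨i, j⟩ hij
    rw [Finset.mem_addAntidiagonal] at hij
    obtain ⟨hi, hj, -⟩ := hij
    have hi' : i < 0 := by
      by_contra h
      exact hi (by rw [hNcoeff, if_neg h])
    have hj' : j < 0 := by
      by_contra h
      exact hj (by rw [hNcoeff, if_neg h])
    rw [hNcoeff, hNcoeff, if_pos hi', if_pos hj']
    exact hpair i j hi' hj'
  obtain ⟨m, rfl⟩ : ∃ m, e = m + 1 := ⟨e - 1, by omega⟩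
  -- binomial expansion
  have hbin : u ^ (m + 1) = P ^ (m + 1) + ((m : HahnSeries ℤ R) + 1) * (P ^ m * N) := by
    rw [huPN]; exact aux_pow_sq_zero P N hNN m
  -- coefficient at i₀
  have hPm := aux_pow_nonneg P hPneg m
  have hcoeff : (u ^ (m + 1)).coeff i₀ =
      ((m : R) + 1) * (u.coeff 0 ^ m * u.coeff i₀) := by
    rw [hbin, HahnSeries.coeff_add,
      (aux_pow_nonneg P hPneg (m + 1)).1 i₀ hi₀, zero_add]
    have hcast : ((m : HahnSeries ℤ R) + 1) * (P ^ m * N)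
        = ((m : R) + 1) • (P ^ m * N) := by
      rw [← Nat.cast_one (R := HahnSeries ℤ R), ← Nat.cast_add,
        ← Nat.cast_one (R := R), ← Nat.cast_add,
        ← nsmul_eq_mul, Nat.cast_smul_eq_nsmul]
    rw [hcast, HahnSeries.coeff_smul, smul_eq_mul]
    congr 1
    -- (P^m * N).coeff i₀ = u.coeff 0 ^ m * u.coeff i₀
    rw [HahnSeries.coeff_mul]
    rw [show u.coeff 0 ^ m * u.coeff i₀ = (P ^ m).coeff 0 * N.coeff i₀ by
      rw [hPm.2, hPcoeff, if_neg (by omega), hNcoeff, if_pos hi₀]]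
    apply Finset.sum_eq_single ((0 : ℤ), i₀)
    · rintro ⟨i, j⟩ hij hnep
      rw [Finset.mem_addAntidiagonal] at hij
      obtain ⟨hi, hj, hsum⟩ := hij
      exfalso; apply hnep
      have h1 : ¬ i < 0 := fun h => hi (hPm.1 i h)
      have h2 : ¬ i₀ ≤ j → N.coeff j = 0 := by
        intro h
        rw [hNcoeff]
        by_cases hj0 : j < 0
        · rw [if_pos hj0]; exact hmin j (by omega)
        · rw [if_neg hj0]
      have h3 : i₀ ≤ j := by
        by_contra h
        exact hj (h2 h)
      have h4 : ¬ j ≥ 0 → True := fun _ => trivial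
      have hj' : j < 0 := by
        by_contra h
        omega
      have : i = 0 ∧ j = i₀ := by omega
      simp [Prod.ext_iff, this.1, this.2]
    · intro h
      by_cases hx0 : (P ^ m).coeff 0 = 0
      · rw [hx0, zero_mul]
      · by_cases hy0 : N.coeff i₀ = 0
        · rw [hy0, mul_zero]
        · exact absurd (Finset.mem_addAntidiagonal.2
            ⟨Function.mem_support.2 hx0, Function.mem_support.2 hy0, zero_add i₀⟩) h
  -- conclusion
  have hz := hpow i₀ hdvd
  rw [hcoeff] at hz
  -- (m+1 : R) is a unit
  have hnat : IsUnit ((m : R) + 1) := by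
    have : IsUnit ((m + 1 : ℕ) : ℂ) := by
      simp [isUnit_iff_ne_zero, Nat.cast_add_one_ne_zero]
    have := this.map (algebraMap ℂ R)
    rwa [map_natCast, Nat.cast_add, Nat.cast_one] at this
  have h1 : u.coeff 0 ^ m * u.coeff i₀ = 0 := (hnat.mul_right_eq_zero).mp hz
  exact hne (((h0.pow m).mul_right_eq_zero).mp h1)
end
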